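/- For the presentation μ = (⟨x, y, t⟩; {y⁻¹xyx⁻², t⁻¹xty⁻¹, a}) of the trivial group, if Area_μ(x) > E_{n-1}, then any sequence of elementary Tietze transformations (Op₁^{±1}: insert/delete x_j x_j⁻¹ in a relator; Op₂: cyclic permutation of a relator; Op₃: inversion of a relator; Op₄: multiply one relator by another; Op₅^{±1}: add/remove a generator together with itself as a relator) reducing μ to the empty presentation has length greater than log₂(E_{n-1}) ≥ E_{n-2}. -/

import Mathlib

/-! Track, backwards along the Tietze sequence, a bound on the area of every generator in the
current relators. The empty presentation has no generators. Across a move `P → Q` every relator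
of `Q` has area at most `2` in the relators of `P` (only Op₄ needs `2`), Op₅ is undone by killing
the new generator, and the generator removed by Op₅⁻¹ is itself a relator of `P`; so a bound `N`
for `Q` gives the bound `2 N + 1` for `P`. Hence `E (n - 1) < Area_μ(x) ≤ 2 ^ k - 1`, and
`E (n - 1) = 2 ^ E (n - 2)` gives `E (n - 2) < k`. -/

/-- Tower of exponentials: E 0 = 1, E (n+1) = 2^(E n). -/
def E : ℕ → ℕ
  | 0 => 1
  | n + 1 => 2 ^ E n

/-- Words over n generators and their inverses. -/
abbrev W (n : ℕ) := List (Fin n × Bool)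

/-- Formal inverse of a word. -/
def winv {n : ℕ} (w : W n) : W n := (w.map fun p => (p.1, !p.2)).reverse

/-- Re-reading a word over n generators as a word over n+1 generators. -/
def embW {n : ℕ} (w : W n) : W (n + 1) := w.map fun p => (p.1.castSucc, p.2)

/-- A finite presentation: a number of generators and a list of relator words. -/
structure Pres where
  n : ℕ
  rels : List (W n)

/-- Elementary Tietze transformations. -/
inductive Tietze : Pres → Pres → Prop where
  /-- Op₁: insert x_j^ε x_j^{-ε} inside a relator. -/
  | op1 (n : ℕ) (l : List (W n)) (i : ℕ) (a b : W n) (j : Fin n) (e : Bool)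
      (h : l[i]? = some (a ++ b)) :
      Tietze ⟨n, l⟩ ⟨n, l.set i (a ++ [(j, e), (j, !e)] ++ b)⟩
  /-- Op₁⁻¹: delete x_j^ε x_j^{-ε} inside a relator. -/
  | op1inv (n : ℕ) (l : List (W n)) (i : ℕ) (a b : W n) (j : Fin n) (e : Bool)
      (h : l[i]? = some (a ++ [(j, e), (j, !e)] ++ b)) :
      Tietze ⟨n, l⟩ ⟨n, l.set i (a ++ b)⟩
  /-- Op₂: cyclically permute a relator. -/
  | op2 (n : ℕ) (l : List (W n)) (i : ℕ) (u v : W n)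
      (h : l[i]? = some (u ++ v)) :
      Tietze ⟨n, l⟩ ⟨n, l.set i (v ++ u)⟩
  /-- Op₃: invert a relator. -/
  | op3 (n : ℕ) (l : List (W n)) (i : ℕ) (a : W n) (h : l[i]? = some a) :
      Tietze ⟨n, l⟩ ⟨n, l.set i (winv a)⟩
  /-- Op₄: multiply a relator by another relator. -/
  | op4 (n : ℕ) (l : List (W n)) (i j : ℕ) (a b : W n) (hij : i ≠ j)
      (ha : l[i]? = some a) (hb : l[j]? = some b) :
      Tietze ⟨n, l⟩ ⟨n, l.set i (a ++ b)⟩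
  /-- Op₅: add a fresh generator together with itself as a relator. -/
  | op5 (n : ℕ) (l : List (W n)) :
      Tietze ⟨n, l⟩ ⟨n + 1, l.map embW ++ [[(Fin.last n, true)]]⟩
  /-- Op₅⁻¹: remove a generator occurring as a relator. -/
  | op5inv (n : ℕ) (l : List (W n)) :
      Tietze ⟨n + 1, l.map embW ++ [[(Fin.last n, true)]]⟩ ⟨n, l⟩

/-- `w` is a product of `N` conjugates `g r^±1 g⁻¹` with `r ∈ S`, in the free group. -/
def IsConjProd {X : Type*} (S : Set (FreeGroup X)) (N : ℕ) (w : FreeGroup X) : Prop :=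
  ∃ g r : Fin N → FreeGroup X, ∃ ε : Fin N → ℤ,
    (∀ i, r i ∈ S ∧ (ε i = 1 ∨ ε i = -1)) ∧
    w = (List.ofFn fun i => g i * r i ^ ε i * (g i)⁻¹).prod

/-- The relator word y⁻¹xyx⁻² over the generators x, y, t (indices 0, 1, 2). -/
def r1w : W 3 := [(1, false), (0, true), (1, true), (0, false), (0, false)]

/-- The relator word t⁻¹xty⁻¹. -/
def r2w : W 3 := [(2, false), (0, true), (2, true), (1, false)]

open Pointwise Group

section Area

variable {G H : Type*} [Group G] [Group H]

def AreaLE (S : Set G) (N : ℕ) (w : G) : Prop :=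
  ∃ L : List G, L.length ≤ N ∧ (∀ u ∈ L, u ∈ conjugatesOfSet (S ∪ S⁻¹)) ∧ L.prod = w

theorem inv_mem_conjugatesOfSet_union_inv {S : Set G} {u : G}
    (hu : u ∈ conjugatesOfSet (S ∪ S⁻¹)) : u⁻¹ ∈ conjugatesOfSet (S ∪ S⁻¹) := by
  obtain ⟨b, hb, hbu⟩ := mem_conjugatesOfSet_iff.1 hu
  obtain ⟨c, rfl⟩ := isConj_iff.1 hbu
  refine mem_conjugatesOfSet_iff.2 ⟨b⁻¹, ?_, isConj_iff.2 ⟨c, by group⟩⟩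
  rcases hb with hb | hb
  · exact Or.inr (by simpa using hb)
  · exact Or.inl hb

theorem areaLE_one (S : Set G) (N : ℕ) : AreaLE S N 1 :=
  ⟨[], Nat.zero_le N, by simp, rfl⟩

namespace AreaLE

variable {S : Set G} {N M : ℕ} {v w : G}

theorem of_mem {r : G} (hr : r ∈ S) : AreaLE S 1 r :=
  ⟨[r], le_rfl, by simpa using subset_conjugatesOfSet (s := S ∪ S⁻¹) (Or.inl hr), by simp⟩

theorem mono (hNM : N ≤ M) (h : AreaLE S N w) : AreaLE S M w :=
  let ⟨L, hlen, hL, hprod⟩ := h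
  ⟨L, hlen.trans hNM, hL, hprod⟩

theorem mul (hv : AreaLE S N v) (hw : AreaLE S M w) : AreaLE S (N + M) (v * w) := by
  obtain ⟨L, hlen, hL, rfl⟩ := hv
  obtain ⟨L', hlen', hL', rfl⟩ := hw
  refine ⟨L ++ L', by simp; omega, fun u hu => ?_, List.prod_append⟩
  rcases List.mem_append.1 hu with hu | hu
  exacts [hL u hu, hL' u hu]

theorem inv (h : AreaLE S N w) : AreaLE S N w⁻¹ := by
  obtain ⟨L, hlen, hL, rfl⟩ := h
  refine ⟨(L.map (·⁻¹)).reverse, by simpa using hlen, fun u hu => ?_,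
    (List.prod_inv_reverse L).symm⟩
  obtain ⟨v, hv, rfl⟩ := List.mem_map.1 (List.mem_reverse.1 hu)
  exact inv_mem_conjugatesOfSet_union_inv (hL v hv)

theorem conj (h : AreaLE S N w) (c : G) : AreaLE S N (c * w * c⁻¹) := by
  obtain ⟨L, hlen, hL, rfl⟩ := h
  refine ⟨L.map (MulAut.conj c), by simpa using hlen, fun u hu => ?_,
    (map_list_prod (MulAut.conj c) L).symm⟩
  obtain ⟨v, hv, rfl⟩ := List.mem_map.1 hu
  exact conj_mem_conjugatesOfSet (hL v hv)

theorem list_prod {c : ℕ} {L : List G} (h : ∀ u ∈ L, AreaLE S c u) :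
    AreaLE S (c * L.length) L.prod := by
  induction L with
  | nil => exact areaLE_one S _
  | cons u L ih =>
    rw [List.prod_cons, List.length_cons, Nat.mul_succ, Nat.add_comm]
    exact (h u List.mem_cons_self).mul (ih fun v hv => h v (List.mem_cons_of_mem u hv))

theorem map {T : Set H} {c : ℕ} (f : G →* H) (hS : ∀ s ∈ S, AreaLE T c (f s))
    (h : AreaLE S N w) : AreaLE T (c * N) (f w) := by
  obtain ⟨L, hlen, hL, rfl⟩ := h
  rw [map_list_prod]
  refine (list_prod fun u hu => ?_).mono (by simpa using Nat.mul_le_mul_left c hlen)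
  obtain ⟨v, hv, rfl⟩ := List.mem_map.1 hu
  obtain ⟨b, hb, hbv⟩ := mem_conjugatesOfSet_iff.1 (hL v hv)
  obtain ⟨d, rfl⟩ := isConj_iff.1 hbv
  rw [map_mul, map_mul, map_inv]
  refine conj ?_ (f d)
  rcases hb with hb | hb
  · exact hS b hb
  · simpa using (hS _ hb).inv

theorem exists_isConjProd {X : Type*} {S : Set (FreeGroup X)} {w : FreeGroup X}
    (h : AreaLE S N w) : ∃ M ≤ N, IsConjProd S M w := by
  obtain ⟨L, hlen, hL, rfl⟩ := h
  have hfactor : ∀ i : Fin L.length, ∃ g r : FreeGroup X, ∃ ε : ℤ,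
      (r ∈ S ∧ (ε = 1 ∨ ε = -1)) ∧ L[i] = g * r ^ ε * g⁻¹ := by
    intro i
    obtain ⟨b, hb, hbu⟩ := mem_conjugatesOfSet_iff.1 (hL _ (List.getElem_mem i.isLt))
    obtain ⟨d, hd⟩ := isConj_iff.1 hbu
    rcases hb with hb | hb
    · exact ⟨d, b, 1, ⟨hb, Or.inl rfl⟩, by simp [hd]⟩
    · exact ⟨d, b⁻¹, -1, ⟨hb, Or.inr rfl⟩, by simp [hd]⟩
  choose g r ε hr hL using hfactor
  refine ⟨L.length, hlen, g, r, ε, hr, ?_⟩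
  simp [← hL]

end AreaLE

end Area

section Presentation

variable {n N : ℕ}

def relSet (l : List (W n)) : Set (FreeGroup (Fin n)) :=
  FreeGroup.mk '' {w | w ∈ l}

def GeneratorsAreaLE (P : Pres) (N : ℕ) : Prop :=
  ∀ j, AreaLE (relSet P.rels) N (FreeGroup.of j)

theorem mk_mem_relSet {l : List (W n)} {w : W n} (hw : w ∈ l) : FreeGroup.mk w ∈ relSet l :=
  ⟨w, hw, rfl⟩

theorem mk_append_cancel_append (a b : W n) (j : Fin n) (e : Bool) :
    FreeGroup.mk (a ++ [(j, e), (j, !e)] ++ b) = FreeGroup.mk (a ++ b) := by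
  rw [List.append_assoc]
  exact Quot.sound FreeGroup.Red.Step.not

def eraseLast (n : ℕ) : FreeGroup (Fin (n + 1)) →* FreeGroup (Fin n) :=
  FreeGroup.lift (Fin.lastCases 1 FreeGroup.of)

theorem eraseLast_of_last : eraseLast n (FreeGroup.of (Fin.last n)) = 1 := by
  simp [eraseLast]

theorem eraseLast_mk_embW (w : W n) : eraseLast n (FreeGroup.mk (embW w)) = FreeGroup.mk w := by
  have hcomp : (eraseLast n).comp (FreeGroup.map Fin.castSucc) = MonoidHom.id _ :=
    FreeGroup.ext_hom _ _ fun j => by simp [eraseLast]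
  exact DFunLike.congr_fun hcomp (FreeGroup.mk w)

namespace GeneratorsAreaLE

theorem mono {P : Pres} {M : ℕ} (hNM : N ≤ M) (h : GeneratorsAreaLE P N) :
    GeneratorsAreaLE P M :=
  fun j => (h j).mono hNM

theorem of_set {l : List (W n)} {i : ℕ} {w : W n} (hw : AreaLE (relSet l) 2 (FreeGroup.mk w))
    (h : GeneratorsAreaLE ⟨n, l.set i w⟩ N) : GeneratorsAreaLE ⟨n, l⟩ (2 * N) := by
  refine fun j => (h j).map (MonoidHom.id _) ?_
  rintro _ ⟨v, hv, rfl⟩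
  rcases List.mem_or_eq_of_mem_set hv with hv | hv
  · exact (AreaLE.of_mem (mk_mem_relSet hv)).mono one_le_two
  · exact hv ▸ hw

theorem of_addGen {l : List (W n)}
    (h : GeneratorsAreaLE ⟨n + 1, l.map embW ++ [[(Fin.last n, true)]]⟩ N) :
    GeneratorsAreaLE ⟨n, l⟩ N := by
  intro j
  have hmap := (h j.castSucc).map (eraseLast n) (T := relSet l) (c := 1) ?_
  · simpa [eraseLast] using hmap
  rintro _ ⟨v, hv, rfl⟩
  rcases List.mem_append.1 hv with hv | hv
  · obtain ⟨w, hw, rfl⟩ := List.mem_map.1 hv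
    rw [eraseLast_mk_embW]
    exact AreaLE.of_mem (mk_mem_relSet hw)
  · rw [List.mem_singleton.1 hv]
    exact eraseLast_of_last ▸ areaLE_one _ _

theorem of_removeGen {l : List (W n)} (h : GeneratorsAreaLE ⟨n, l⟩ N) :
    GeneratorsAreaLE ⟨n + 1, l.map embW ++ [[(Fin.last n, true)]]⟩ (N + 1) := by
  intro j
  induction j using Fin.lastCases with
  | last => exact (AreaLE.of_mem (mk_mem_relSet (by simp))).mono (by omega)
  | cast m =>
    have hmap := (h m).map (FreeGroup.map Fin.castSucc)
      (T := relSet (l.map embW ++ [[(Fin.last n, true)]])) (c := 1) ?_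
    · simpa using hmap.mono (Nat.le_succ _)
    rintro _ ⟨w, hw, rfl⟩
    exact AreaLE.of_mem (mk_mem_relSet (List.mem_append_left _ (List.mem_map_of_mem hw)))

theorem of_tietze {P Q : Pres} (hPQ : Tietze P Q) (hQ : GeneratorsAreaLE Q N) :
    GeneratorsAreaLE P (2 * N + 1) := by
  rcases hPQ with ⟨n, l, i, a, b, j, e, h⟩ | ⟨n, l, i, a, b, j, e, h⟩ | ⟨n, l, i, u, v, h⟩ |
    ⟨n, l, i, a, h⟩ | ⟨n, l, i, j, a, b, -, ha, hb⟩ | ⟨n, l⟩ | ⟨n, l⟩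
  · refine (of_set ?_ hQ).mono (Nat.le_succ _)
    rw [mk_append_cancel_append]
    exact (AreaLE.of_mem (mk_mem_relSet (List.mem_of_getElem? h))).mono one_le_two
  · refine (of_set ?_ hQ).mono (Nat.le_succ _)
    rw [← mk_append_cancel_append a b j e]
    exact (AreaLE.of_mem (mk_mem_relSet (List.mem_of_getElem? h))).mono one_le_two
  · refine (of_set ?_ hQ).mono (Nat.le_succ _)
    have hvu : FreeGroup.mk (v ++ u) =
        (FreeGroup.mk u)⁻¹ * FreeGroup.mk (u ++ v) * (FreeGroup.mk u)⁻¹⁻¹ := by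
      rw [← FreeGroup.mul_mk, ← FreeGroup.mul_mk]
      group
    rw [hvu]
    exact ((AreaLE.of_mem (mk_mem_relSet (List.mem_of_getElem? h))).conj _).mono one_le_two
  · refine (of_set ?_ hQ).mono (Nat.le_succ _)
    rw [winv, ← FreeGroup.invRev, ← FreeGroup.inv_mk]
    exact (AreaLE.of_mem (mk_mem_relSet (List.mem_of_getElem? h))).inv.mono one_le_two
  · refine (of_set ?_ hQ).mono (Nat.le_succ _)
    rw [← FreeGroup.mul_mk]
    exact (AreaLE.of_mem (mk_mem_relSet (List.mem_of_getElem? ha))).mul (AreaLE.of_mem (mk_mem_relSet (List.mem_of_getElem? hb)))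
  · exact hQ.of_addGen.mono (by omega)
  · exact hQ.of_removeGen.mono (by omega)

end GeneratorsAreaLE

theorem generatorsAreaLE_of_tietze_chain :
    ∀ {k : ℕ} (seq : Fin (k + 1) → Pres), (∀ i : Fin k, Tietze (seq i.castSucc) (seq i.succ)) →
      (seq (Fin.last k)).n = 0 → GeneratorsAreaLE (seq 0) (2 ^ k - 1)
  | 0, seq, _, hlast => fun j => (Fin.cast hlast j).elim0
  | k + 1, seq, hstep, hlast => by
    have htail := generatorsAreaLE_of_tietze_chain (Fin.tail seq) (fun i => hstep i.succ) hlast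
    have hpow : 2 * (2 ^ k - 1) + 1 = 2 ^ (k + 1) - 1 := by
      have := Nat.one_le_two_pow (n := k)
      rw [pow_succ]
      omega
    exact hpow ▸ GeneratorsAreaLE.of_tietze (hstep 0) htail

end Presentation

/-- For μ = (x, y, t; y⁻¹xyx⁻², t⁻¹xty⁻¹, a): if Area_μ(x) > E (n-1), then every
sequence of elementary Tietze transformations from μ to the empty presentation has
length greater than log₂(E (n-1)) = E (n-2). -/
theorem stmt19 (n : ℕ) (hn : 2 ≤ n) (a : W 3)
    (hArea : ∀ N : ℕ,
      IsConjProd {FreeGroup.mk r1w, FreeGroup.mk r2w, FreeGroup.mk a} N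
        (FreeGroup.of (0 : Fin 3)) → E (n - 1) < N)
    (k : ℕ) (seq : Fin (k + 1) → Pres)
    (h0 : seq 0 = ⟨3, [r1w, r2w, a]⟩)
    (hlast : seq (Fin.last k) = ⟨0, []⟩)
    (hstep : ∀ i : Fin k, Tietze (seq i.castSucc) (seq i.succ)) :
    E (n - 2) < k := by
  have hgen := generatorsAreaLE_of_tietze_chain seq hstep (by rw [hlast])
  rw [h0] at hgen
  obtain ⟨N, hN, hx⟩ := (hgen (0 : Fin 3)).exists_isConjProd
  have hrels : relSet [r1w, r2w, a] = {FreeGroup.mk r1w, FreeGroup.mk r2w, FreeGroup.mk a} := by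
    ext
    simp [relSet, eq_comm]
  have hE : E (n - 1) < 2 ^ k := by
    have := hArea N (hrels ▸ hx)
    omega
  obtain ⟨m, rfl⟩ : ∃ m, n = m + 2 := ⟨n - 2, by omega⟩
  exact (Nat.pow_lt_pow_iff_right one_lt_two).1 hE
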